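/- Let $q_1, q_2, q_3 \in \mathbb{R}^n$ be pairwise distinct unit vectors, with stabilizer parabolic subalgebras $\mathfrak{p}_i = \{\begin{pmatrix} A & b \\ b^t & 0\end{pmatrix} \in \mathfrak{so}(n,1) : Aq_i + b = (b \cdot q_i) q_i\}$. Then $\mathfrak{so}(n,1) = \mathfrak{p}_1 + (\mathfrak{p}_2 \cap \mathfrak{p}_3)$. -/

import Mathlib

/-!
`𝔭ᵢ` is the stabilizer of `qᵢ` for the infinitesimal action `X(q) = A q + b - (b ⬝ q) q` of
`X = (A, b) ∈ 𝔰𝔬(n,1)` on the unit sphere. So it suffices that every pair of tangent vectors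
`w₂ ⊥ q₂`, `w₃ ⊥ q₃` is `(Y(q₂), Y(q₃))` for some `Y ∈ 𝔭₁`: then `X - Y ∈ 𝔭₂ ∩ 𝔭₃` for the
`Y` matching `X` at `q₂` and `q₃`.

Every `Y = (M, t q₁ - M q₁)` with `M` skew lies in `𝔭₁`, and `Y(q) = w` amounts to prescribing
`M (q - q₁)`. Three distinct points of a sphere are not collinear, so `q₂ - q₁`, `q₃ - q₁` are
independent, and a skew `M` with prescribed values `c, d` on them exists iff
`c ⊥ q₂ - q₁`, `d ⊥ q₃ - q₁` and `c ⬝ (q₃ - q₁) + d ⬝ (q₂ - q₁) = 0`. The first two hold for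
every `t`, and the last one determines `t` because `q₂ ≠ q₃`.
-/

open Matrix

/-- The minimal parabolic subalgebra of `𝔰𝔬(n,1)`, realized as the space of pairs
`(A, b)` with `A` antisymmetric and `A q + b = (b ⬝ᵥ q) q`, sitting inside
`Matrix (Fin n) (Fin n) ℝ × (Fin n → ℝ)`. -/
def parabolic (n : ℕ) (q : Fin n → ℝ) :
    Submodule ℝ (Matrix (Fin n) (Fin n) ℝ × (Fin n → ℝ)) where
  carrier := {p | p.1ᵀ = -p.1 ∧ p.1.mulVec q + p.2 = (p.2 ⬝ᵥ q) • q}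
  zero_mem' := by simp
  add_mem' := by
    rintro ⟨A, b⟩ ⟨A', b'⟩ ⟨h1, h2⟩ ⟨h1', h2'⟩
    refine ⟨by simp only [Prod.fst_add, Matrix.transpose_add, h1, h1', neg_add], ?_⟩
    simp only [Prod.fst_add, Prod.snd_add, Matrix.add_mulVec, add_dotProduct, add_smul,
      ← h2, ← h2']
    abel
  smul_mem' := by
    rintro c ⟨A, b⟩ ⟨h1, h2⟩
    refine ⟨by simp [Matrix.transpose_smul, h1], ?_⟩
    simp only [Prod.smul_fst, Prod.smul_snd, Matrix.smul_mulVec, smul_dotProduct,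
      smul_smul, ← smul_add, h2]
    simp [smul_eq_mul]

/-- The Lie algebra `𝔰𝔬(n,1)`, realized as pairs `(A, b)` with `A` antisymmetric. -/
def soN1 (n : ℕ) : Submodule ℝ (Matrix (Fin n) (Fin n) ℝ × (Fin n → ℝ)) where
  carrier := {p | p.1ᵀ = -p.1}
  zero_mem' := by simp
  add_mem' := by
    rintro ⟨A, b⟩ ⟨A', b'⟩ h1 h1'
    simp only [Set.mem_setOf_eq, Prod.fst_add, Matrix.transpose_add, neg_add] at *
    rw [h1, h1']
  smul_mem' := by
    rintro c ⟨A, b⟩ h1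
    simp only [Set.mem_setOf_eq, Prod.smul_fst, Matrix.transpose_smul] at *
    rw [h1, smul_neg]

section Skew

variable {K ι : Type*} [Field K] [Fintype ι]

lemma dotProduct_mulVec_of_transpose_eq_neg {A : Matrix ι ι K} (hA : Aᵀ = -A) (x y : ι → K) :
    x ⬝ᵥ A *ᵥ y = -(A *ᵥ x ⬝ᵥ y) := by
  rw [dotProduct_mulVec, ← vecMul_transpose, hA, vecMul_neg, neg_dotProduct, neg_neg]

lemma mulVec_dotProduct_self_of_transpose_eq_neg [CharZero K] {A : Matrix ι ι K}
    (hA : Aᵀ = -A) (x : ι → K) : A *ᵥ x ⬝ᵥ x = 0 := by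
  have h := dotProduct_mulVec_of_transpose_eq_neg hA x x
  rw [dotProduct_comm] at h
  exact CharZero.eq_neg_self_iff.mp h

/-- With `x*, y*` the basis of `span {x, y}` dual to `x, y`, the skew matrix is
`c ∧ x* + d ∧ y* + (d ⬝ x) (y* ∧ x*)`, where `u ∧ v = u vᵀ - v uᵀ`. -/
lemma exists_transpose_eq_neg_mulVec_eq (x y c d : ι → K)
    (hgram : (x ⬝ᵥ x) * (y ⬝ᵥ y) - (x ⬝ᵥ y) ^ 2 ≠ 0)
    (hcx : c ⬝ᵥ x = 0) (hdy : d ⬝ᵥ y = 0) (hcd : c ⬝ᵥ y + d ⬝ᵥ x = 0) :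
    ∃ M : Matrix ι ι K, Mᵀ = -M ∧ M *ᵥ x = c ∧ M *ᵥ y = d := by
  set Δ := (x ⬝ᵥ x) * (y ⬝ᵥ y) - (x ⬝ᵥ y) ^ 2
  set xs := Δ⁻¹ • ((y ⬝ᵥ y) • x - (x ⬝ᵥ y) • y)
  set ys := Δ⁻¹ • ((x ⬝ᵥ x) • y - (x ⬝ᵥ y) • x)
  have hyx : y ⬝ᵥ x = x ⬝ᵥ y := dotProduct_comm y x
  have hxs : xs ⬝ᵥ x = 1 ∧ xs ⬝ᵥ y = 0 := by
    simp only [xs, smul_dotProduct, sub_dotProduct, smul_eq_mul, hyx]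
    exact ⟨by field_simp; ring, by ring⟩
  have hys : ys ⬝ᵥ x = 0 ∧ ys ⬝ᵥ y = 1 := by
    simp only [ys, smul_dotProduct, sub_dotProduct, smul_eq_mul, hyx]
    exact ⟨by ring, by field_simp; ring⟩
  have hcy : c ⬝ᵥ y = -(d ⬝ᵥ x) := eq_neg_of_add_eq_zero_left hcd
  refine ⟨vecMulVec c xs - vecMulVec xs c + (vecMulVec d ys - vecMulVec ys d)
      + (d ⬝ᵥ x) • (vecMulVec ys xs - vecMulVec xs ys), ?_, ?_, ?_⟩ <;>
    simp only [transpose_add, transpose_sub, transpose_smul, transpose_vecMulVec, add_mulVec,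
      sub_mulVec, smul_mulVec, vecMulVec_mulVec, op_smul_eq_smul, hxs, hys, hcx, hcy, hdy] <;>
    module

end Skew

section Sphere

variable {ι : Type*} [Fintype ι]

lemma eq_smul_of_gram_eq_zero {x y : ι → ℝ} (hx : x ≠ 0)
    (hgram : (x ⬝ᵥ x) * (y ⬝ᵥ y) - (x ⬝ᵥ y) ^ 2 = 0) :
    y = ((x ⬝ᵥ y) / (x ⬝ᵥ x)) • x := by
  have hxx : x ⬝ᵥ x ≠ 0 := fun h => hx (dotProduct_self_eq_zero.mp h)
  -- `‖(x ⬝ x) y - (x ⬝ y) x‖² = (x ⬝ x) · gram`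
  have hw : (x ⬝ᵥ x) • y - (x ⬝ᵥ y) • x = 0 := by
    rw [← dotProduct_self_eq_zero]
    simp only [sub_dotProduct, dotProduct_sub, smul_dotProduct, dotProduct_smul, smul_eq_mul,
      dotProduct_comm y x]
    linear_combination (x ⬝ᵥ x) * hgram
  rw [div_eq_inv_mul, mul_smul, ← sub_eq_zero.mp hw, inv_smul_smul₀ hxx]

lemma eq_or_eq_of_sub_eq_smul_sub {q₁ q₂ q₃ : ι → ℝ} {l : ℝ}
    (hq₁ : q₁ ⬝ᵥ q₁ = 1) (hq₂ : q₂ ⬝ᵥ q₂ = 1) (hq₃ : q₃ ⬝ᵥ q₃ = 1)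
    (h : q₃ - q₁ = l • (q₂ - q₁)) : q₃ = q₁ ∨ q₃ = q₂ := by
  set x := q₂ - q₁
  have hq₂' : q₂ = q₁ + x := by simp [x]
  have hq₃' : q₃ = q₁ + l • x := by rw [← h]; abel
  have hx : 2 * (q₁ ⬝ᵥ x) + x ⬝ᵥ x = 0 := by
    rw [hq₂'] at hq₂
    simp only [add_dotProduct, dotProduct_add, hq₁, dotProduct_comm x q₁] at hq₂
    linarith
  have hl : l * (l - 1) * (x ⬝ᵥ x) = 0 := by
    rw [hq₃'] at hq₃
    simp only [add_dotProduct, dotProduct_add, smul_dotProduct, dotProduct_smul, smul_eq_mul,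
      hq₁, dotProduct_comm x q₁] at hq₃
    linear_combination hq₃ - l * hx
  rcases mul_eq_zero.mp hl with hl | hxx
  · rcases mul_eq_zero.mp hl with hl | hl
    · left; rw [hq₃', hl, zero_smul, add_zero]
    · right; rw [hq₃', sub_eq_zero.mp hl, one_smul, hq₂']
  · left; rw [hq₃', dotProduct_self_eq_zero.mp hxx, smul_zero, add_zero]

lemma gram_sub_ne_zero {q₁ q₂ q₃ : ι → ℝ}
    (hq₁ : q₁ ⬝ᵥ q₁ = 1) (hq₂ : q₂ ⬝ᵥ q₂ = 1) (hq₃ : q₃ ⬝ᵥ q₃ = 1)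
    (h12 : q₁ ≠ q₂) (h13 : q₁ ≠ q₃) (h23 : q₂ ≠ q₃) :
    ((q₂ - q₁) ⬝ᵥ (q₂ - q₁)) * ((q₃ - q₁) ⬝ᵥ (q₃ - q₁)) - ((q₂ - q₁) ⬝ᵥ (q₃ - q₁)) ^ 2 ≠ 0 := by
  intro hgram
  have hx : q₂ - q₁ ≠ 0 := sub_ne_zero.mpr h12.symm
  rcases eq_or_eq_of_sub_eq_smul_sub hq₁ hq₂ hq₃ (eq_smul_of_gram_eq_zero hx hgram) with h | h
  exacts [h13 h.symm, h23 h.symm]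

lemma dotProduct_ne_one_of_ne {q q' : ι → ℝ} (hq : q ⬝ᵥ q = 1)
    (hq' : q' ⬝ᵥ q' = 1) (h : q ≠ q') : q ⬝ᵥ q' ≠ 1 := by
  intro h1
  apply h
  rw [← sub_eq_zero, ← dotProduct_self_eq_zero]
  simp only [sub_dotProduct, dotProduct_sub, hq, hq', h1, dotProduct_comm q' q]
  norm_num

end Sphere

section Parabolic

variable {n : ℕ}

/-- The infinitesimal action of `p ∈ 𝔰𝔬(n,1)` on the sphere at infinity, at the point `q`;
`parabolic n q` is the stabilizer of `q`. -/
def fieldAt (q : Fin n → ℝ) :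
    (Matrix (Fin n) (Fin n) ℝ × (Fin n → ℝ)) →ₗ[ℝ] (Fin n → ℝ) where
  toFun p := p.1 *ᵥ q + p.2 - (p.2 ⬝ᵥ q) • q
  map_add' p p' := by
    simp only [Prod.fst_add, Prod.snd_add, add_mulVec, add_dotProduct]
    module
  map_smul' c p := by
    simp only [Prod.smul_fst, Prod.smul_snd, smul_mulVec, smul_dotProduct, RingHom.id_apply]
    module

lemma fieldAt_apply (q : Fin n → ℝ) (p : Matrix (Fin n) (Fin n) ℝ × (Fin n → ℝ)) :
    fieldAt q p = p.1 *ᵥ q + p.2 - (p.2 ⬝ᵥ q) • q := rfl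

lemma mem_parabolic_iff {q : Fin n → ℝ} {p : Matrix (Fin n) (Fin n) ℝ × (Fin n → ℝ)} :
    p ∈ parabolic n q ↔ p ∈ soN1 n ∧ fieldAt q p = 0 :=
  and_congr_right' sub_eq_zero.symm

lemma parabolic_le_soN1 (q : Fin n → ℝ) : parabolic n q ≤ soN1 n :=
  fun _ hp => (mem_parabolic_iff.mp hp).1

lemma fieldAt_dotProduct_self {q : Fin n → ℝ} (hq : q ⬝ᵥ q = 1)
    {p : Matrix (Fin n) (Fin n) ℝ × (Fin n → ℝ)} (hp : p ∈ soN1 n) :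
    fieldAt q p ⬝ᵥ q = 0 := by
  simp only [fieldAt_apply, sub_dotProduct, add_dotProduct, smul_dotProduct, hq, smul_eq_mul,
    mulVec_dotProduct_self_of_transpose_eq_neg hp]
  ring

lemma sup_inf_parabolic_eq_soN1 {q₁ q₂ q₃ : Fin n → ℝ}
    (h : ∀ p ∈ soN1 n, ∃ r ∈ parabolic n q₁, fieldAt q₂ r = fieldAt q₂ p ∧
      fieldAt q₃ r = fieldAt q₃ p) :
    parabolic n q₁ ⊔ (parabolic n q₂ ⊓ parabolic n q₃) = soN1 n := by
  refine le_antisymm (sup_le (parabolic_le_soN1 q₁) (inf_le_left.trans (parabolic_le_soN1 q₂)))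
    fun p hp => ?_
  obtain ⟨r, hr, hr₂, hr₃⟩ := h p hp
  have hpr : p - r ∈ soN1 n := sub_mem hp (parabolic_le_soN1 q₁ hr)
  refine Submodule.mem_sup.mpr ⟨r, hr, p - r, ⟨?_, ?_⟩, add_sub_cancel r p⟩
  · exact mem_parabolic_iff.mpr ⟨hpr, by rw [map_sub, hr₂, sub_self]⟩
  · exact mem_parabolic_iff.mpr ⟨hpr, by rw [map_sub, hr₃, sub_self]⟩

lemma mk_mem_parabolic {q : Fin n → ℝ} (hq : q ⬝ᵥ q = 1) {M : Matrix (Fin n) (Fin n) ℝ}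
    (hM : Mᵀ = -M) (t : ℝ) : (M, t • q - M *ᵥ q) ∈ parabolic n q := by
  refine mem_parabolic_iff.mpr ⟨hM, ?_⟩
  simp only [fieldAt_apply, sub_dotProduct, smul_dotProduct, hq, smul_eq_mul,
    mulVec_dotProduct_self_of_transpose_eq_neg hM]
  module

/-- The value of `M (q - q₁)` for which `(M, t q₁ - M q₁) ∈ 𝔭₁` takes the value `w` at `q`. -/
noncomputable def targetAt (q₁ q w : Fin n → ℝ) (t : ℝ) : Fin n → ℝ :=
  w + ((w ⬝ᵥ q₁) / (1 - q₁ ⬝ᵥ q)) • q - t • (q₁ + q)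

lemma fieldAt_mk_eq_of_mulVec_sub_eq {q₁ q w : Fin n → ℝ} {M : Matrix (Fin n) (Fin n) ℝ}
    {t : ℝ} (hq₁ : q₁ ⬝ᵥ q₁ = 1) (h1q : q₁ ⬝ᵥ q ≠ 1) (hM : Mᵀ = -M)
    (hMq : M *ᵥ (q - q₁) = targetAt q₁ q w t) :
    fieldAt q (M, t • q₁ - M *ᵥ q₁) = w := by
  set a := (w ⬝ᵥ q₁) / (1 - q₁ ⬝ᵥ q)
  have ha : a * (1 - q₁ ⬝ᵥ q) = w ⬝ᵥ q₁ := div_mul_cancel₀ _ (sub_ne_zero.mpr h1q.symm)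
  have hMq' : M *ᵥ q = targetAt q₁ q w t + M *ᵥ q₁ := by rw [← hMq, mulVec_sub]; abel
  -- `(M q₁) ⬝ q = -(M q) ⬝ q₁ = -(M (q - q₁)) ⬝ q₁` by skewness
  have hMq₁ : M *ᵥ q₁ ⬝ᵥ q = -(targetAt q₁ q w t ⬝ᵥ q₁) := by
    rw [dotProduct_comm, dotProduct_mulVec_of_transpose_eq_neg hM, hMq', add_dotProduct,
      mulVec_dotProduct_self_of_transpose_eq_neg hM, add_zero]
  simp only [fieldAt_apply, hMq', sub_dotProduct, smul_dotProduct, hMq₁, smul_eq_mul]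
  simp only [targetAt, add_dotProduct, sub_dotProduct, smul_dotProduct, hq₁, smul_eq_mul,
    dotProduct_comm q q₁]
  linear_combination (norm := module) ha • q

lemma targetAt_dotProduct_sub {q₁ q w : Fin n → ℝ} (t : ℝ) (hq₁ : q₁ ⬝ᵥ q₁ = 1)
    (hq : q ⬝ᵥ q = 1) (h1q : q₁ ⬝ᵥ q ≠ 1) (hw : w ⬝ᵥ q = 0) :
    targetAt q₁ q w t ⬝ᵥ (q - q₁) = 0 := by
  have ha : (w ⬝ᵥ q₁) / (1 - q₁ ⬝ᵥ q) * (1 - q₁ ⬝ᵥ q) = w ⬝ᵥ q₁ :=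
    div_mul_cancel₀ _ (sub_ne_zero.mpr h1q.symm)
  simp only [targetAt, dotProduct_sub, add_dotProduct, sub_dotProduct, smul_dotProduct,
    smul_eq_mul, hq₁, hq, hw, dotProduct_comm q q₁]
  linear_combination ha

lemma targetAt_dotProduct_add_targetAt_dotProduct {q₁ q₂ q₃ : Fin n → ℝ} (w₂ w₃ : Fin n → ℝ)
    (t : ℝ) (hq₁ : q₁ ⬝ᵥ q₁ = 1) :
    targetAt q₁ q₂ w₂ t ⬝ᵥ (q₃ - q₁) + targetAt q₁ q₃ w₃ t ⬝ᵥ (q₂ - q₁) =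
      targetAt q₁ q₂ w₂ 0 ⬝ᵥ (q₃ - q₁) + targetAt q₁ q₃ w₃ 0 ⬝ᵥ (q₂ - q₁)
        + 2 * (1 - q₂ ⬝ᵥ q₃) * t := by
  simp only [targetAt, zero_smul, sub_zero, sub_dotProduct, add_dotProduct, dotProduct_sub,
    smul_dotProduct, smul_eq_mul, hq₁, dotProduct_comm q₃ q₂,
    dotProduct_comm q₂ q₁, dotProduct_comm q₃ q₁]
  ring

lemma exists_mem_parabolic_fieldAt_eq {q₁ q₂ q₃ : Fin n → ℝ}
    (hq₁ : q₁ ⬝ᵥ q₁ = 1) (hq₂ : q₂ ⬝ᵥ q₂ = 1) (hq₃ : q₃ ⬝ᵥ q₃ = 1)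
    (h12 : q₁ ≠ q₂) (h13 : q₁ ≠ q₃) (h23 : q₂ ≠ q₃) {w₂ w₃ : Fin n → ℝ}
    (hw₂ : w₂ ⬝ᵥ q₂ = 0) (hw₃ : w₃ ⬝ᵥ q₃ = 0) :
    ∃ r ∈ parabolic n q₁, fieldAt q₂ r = w₂ ∧ fieldAt q₃ r = w₃ := by
  have h1q₂ := dotProduct_ne_one_of_ne hq₁ hq₂ h12
  have h1q₃ := dotProduct_ne_one_of_ne hq₁ hq₃ h13
  have h23' : 2 * (1 - q₂ ⬝ᵥ q₃) ≠ 0 :=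
    mul_ne_zero two_ne_zero (sub_ne_zero.mpr (dotProduct_ne_one_of_ne hq₂ hq₃ h23).symm)
  -- the left-hand side is affine in `t` with slope `2 (1 - q₂ ⬝ q₃) ≠ 0`
  obtain ⟨t, ht⟩ : ∃ t : ℝ,
      targetAt q₁ q₂ w₂ t ⬝ᵥ (q₃ - q₁) + targetAt q₁ q₃ w₃ t ⬝ᵥ (q₂ - q₁) = 0 :=
    ⟨_, by rw [targetAt_dotProduct_add_targetAt_dotProduct w₂ w₃ _ hq₁,
      mul_div_cancel₀ _ h23', add_neg_cancel]⟩
  obtain ⟨M, hM, hM₂, hM₃⟩ := exists_transpose_eq_neg_mulVec_eq (q₂ - q₁) (q₃ - q₁)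
    (targetAt q₁ q₂ w₂ t) (targetAt q₁ q₃ w₃ t) (gram_sub_ne_zero hq₁ hq₂ hq₃ h12 h13 h23)
    (targetAt_dotProduct_sub t hq₁ hq₂ h1q₂ hw₂) (targetAt_dotProduct_sub t hq₁ hq₃ h1q₃ hw₃) ht
  exact ⟨_, mk_mem_parabolic hq₁ hM t, fieldAt_mk_eq_of_mulVec_sub_eq hq₁ h1q₂ hM hM₂,
    fieldAt_mk_eq_of_mulVec_sub_eq hq₁ h1q₃ hM hM₃⟩

end Parabolic

/-- For pairwise distinct unit vectors `q₁, q₂, q₃`, one has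
`𝔰𝔬(n,1) = 𝔭₁ + (𝔭₂ ∩ 𝔭₃)`. -/
theorem stmt13 {n : ℕ} (q₁ q₂ q₃ : Fin n → ℝ)
    (hq₁ : q₁ ⬝ᵥ q₁ = 1) (hq₂ : q₂ ⬝ᵥ q₂ = 1) (hq₃ : q₃ ⬝ᵥ q₃ = 1)
    (h12 : q₁ ≠ q₂) (h13 : q₁ ≠ q₃) (h23 : q₂ ≠ q₃) :
    parabolic n q₁ ⊔ (parabolic n q₂ ⊓ parabolic n q₃) = soN1 n :=
  sup_inf_parabolic_eq_soN1 fun _ hp => exists_mem_parabolic_fieldAt_eq hq₁ hq₂ hq₃ h12 h13 h23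
    (fieldAt_dotProduct_self hq₂ hp) (fieldAt_dotProduct_self hq₃ hp)
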